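/- arXiv:2603.23946 — 6 statements merged into one kernel-verified Lean document; each statement's English description precedes it below -/
import Mathlib

section
/- Let L > 0 and let k : ℝ → ℝ be a continuous L-periodic function. Then (∫₀ᴸ sqrt(1+k(s)²) ds)² = L² + (∫₀ᴸ k(s) ds)² + R(k), and R(k) ≥ 0. -/
/-- The remainder functional `R(k)` for an `L`-periodic function `k`. -/
noncomputable def remainderR (L : ℝ) (k : ℝ → ℝ) : ℝ :=
  ∫ s in (0:ℝ)..L, ∫ σ in (0:ℝ)..L,
    (k s - k σ) ^ 2 /
      (Real.sqrt ((1 + (k s) ^ 2) * (1 + (k σ) ^ 2)) + 1 + k s * k σ)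

lemma den_pos (a b : ℝ) :
    0 < Real.sqrt ((1 + a ^ 2) * (1 + b ^ 2)) + 1 + a * b := by
  have hprod : (0:ℝ) ≤ (1 + a ^ 2) * (1 + b ^ 2) := by positivity
  rcases eq_or_ne a b with h | h
  · subst h
    have : Real.sqrt ((1 + a ^ 2) * (1 + a ^ 2)) = 1 + a ^ 2 := by
      rw [Real.sqrt_mul_self (by positivity)]
    rw [this]; nlinarith [sq_nonneg a]
  · have hlt : (1 + a * b) ^ 2 < (1 + a ^ 2) * (1 + b ^ 2) := by
      nlinarith [sq_nonneg (a - b), sq_pos_of_ne_zero (sub_ne_zero.mpr h)]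
    have : |1 + a * b| < Real.sqrt ((1 + a ^ 2) * (1 + b ^ 2)) := by
      have := Real.sqrt_lt_sqrt (sq_nonneg (1 + a * b)) hlt
      rwa [Real.sqrt_sq_eq_abs] at this
    have habs := abs_le.mp (le_of_lt this)
    nlinarith [this, neg_abs_le (1 + a * b), le_abs_self (1 + a * b)]

lemma pointwise_eq (a b : ℝ) :
    (a - b) ^ 2 / (Real.sqrt ((1 + a ^ 2) * (1 + b ^ 2)) + 1 + a * b)
      = Real.sqrt (1 + a ^ 2) * Real.sqrt (1 + b ^ 2) - (1 + a * b) := by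
  have hprod : (0:ℝ) ≤ (1 + a ^ 2) * (1 + b ^ 2) := by positivity
  have hs : Real.sqrt ((1 + a ^ 2) * (1 + b ^ 2))
      = Real.sqrt (1 + a ^ 2) * Real.sqrt (1 + b ^ 2) := Real.sqrt_mul (by positivity) _
  have hd := den_pos a b
  rw [div_eq_iff (ne_of_gt hd), hs] at *
  have hsq : (Real.sqrt (1 + a ^ 2) * Real.sqrt (1 + b ^ 2)) ^ 2
      = (1 + a ^ 2) * (1 + b ^ 2) := by
    rw [mul_pow, Real.sq_sqrt (by positivity), Real.sq_sqrt (by positivity)]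
  nlinarith [hsq]

theorem sq_integral_sqrt_one_add_sq (L : ℝ) (hL : 0 < L) (k : ℝ → ℝ)
    (hk : Continuous k) (hper : Function.Periodic k L) :
    (∫ s in (0:ℝ)..L, Real.sqrt (1 + (k s) ^ 2)) ^ 2
      = L ^ 2 + (∫ s in (0:ℝ)..L, k s) ^ 2 + remainderR L k ∧
    0 ≤ remainderR L k := by
  set A := ∫ s in (0:ℝ)..L, Real.sqrt (1 + (k s) ^ 2) with hA
  set B := ∫ s in (0:ℝ)..L, k s with hB
  have hc1 : Continuous fun s => Real.sqrt (1 + (k s) ^ 2) :=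
    (continuous_const.add (hk.pow 2)).sqrt
  -- compute inner integral
  have hinner : ∀ s : ℝ,
      (∫ σ in (0:ℝ)..L, (k s - k σ) ^ 2 /
        (Real.sqrt ((1 + (k s) ^ 2) * (1 + (k σ) ^ 2)) + 1 + k s * k σ))
      = Real.sqrt (1 + (k s) ^ 2) * A - (L + k s * B) := by
    intro s
    have h1 : (∫ σ in (0:ℝ)..L, (k s - k σ) ^ 2 /
        (Real.sqrt ((1 + (k s) ^ 2) * (1 + (k σ) ^ 2)) + 1 + k s * k σ))
        = ∫ σ in (0:ℝ)..L,
            (Real.sqrt (1 + (k s) ^ 2) * Real.sqrt (1 + (k σ) ^ 2) - (1 + k s * k σ)) := by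
      apply intervalIntegral.integral_congr
      intro σ _
      exact pointwise_eq (k s) (k σ)
    rw [h1]
    have hi1 : IntervalIntegrable
        (fun σ => Real.sqrt (1 + (k s) ^ 2) * Real.sqrt (1 + (k σ) ^ 2))
        MeasureTheory.volume 0 L :=
      (continuous_const.mul hc1).intervalIntegrable _ _
    have hi2 : IntervalIntegrable (fun σ => (1 : ℝ) + k s * k σ)
        MeasureTheory.volume 0 L :=
      (continuous_const.add (continuous_const.mul hk)).intervalIntegrable _ _
    rw [intervalIntegral.integral_sub hi1 hi2,
      intervalIntegral.integral_const_mul,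
      intervalIntegral.integral_add (intervalIntegrable_const)
        ((show Continuous (fun x => k s * k x) from continuous_const.mul hk).intervalIntegrable _ _),
      intervalIntegral.integral_const_mul, intervalIntegral.integral_const]
    simp [hA, hB]
  have hR : remainderR L k = A * A - (L * L + B * B) := by
    unfold remainderR
    rw [intervalIntegral.integral_congr (g := fun s =>
        Real.sqrt (1 + (k s) ^ 2) * A - (L + k s * B)) (fun s _ => hinner s)]
    rw [intervalIntegral.integral_sub ((show Continuous (fun x => Real.sqrt (1 + (k x) ^ 2) * A) from
          hc1.mul continuous_const).intervalIntegrable _ _)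
        ((show Continuous (fun x => L + k x * B) from
          continuous_const.add (hk.mul continuous_const)).intervalIntegrable _ _),
      intervalIntegral.integral_mul_const,
      intervalIntegral.integral_add (intervalIntegrable_const)
        ((show Continuous (fun x => k x * B) from hk.mul continuous_const).intervalIntegrable _ _),
      intervalIntegral.integral_mul_const, intervalIntegral.integral_const]
    simp [hA, hB]
  constructor
  · rw [hR]; ring
  · unfold remainderR
    apply intervalIntegral.integral_nonneg hL.le
    intro s _
    apply intervalIntegral.integral_nonneg hL.le
    intro σ _
    exact div_nonneg (sq_nonneg _) (den_pos (k s) (k σ)).le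
end

section
/- Let L > 0 and let γ : ℝ → ℝ³ be a smooth L-periodic curve with ‖γ(s)‖ = 1 and ‖γ'(s)‖ = 1 for all s. Define η(s) := γ(s) × γ'(s) and the geodesic curvature k_g(s) := ⟨γ''(s), η(s)⟩. Assume k_g(s) > 0 for all s, and assume there exists A with 0 < A < 2π and ∫₀ᴸ k_g(s) ds = 2π − A (the Gauss–Bonnet relation for the enclosed spherical disc of area A). Then L² − A(4π − A) ≤ (∫₀ᴸ sqrt(1 + k_g(s)²) ds)² − 4π². -/
open scoped RealInnerProductSpace

/-- The cross product of two vectors in `ℝ³`. -/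
noncomputable def cross3 (a b : EuclideanSpace ℝ (Fin 3)) : EuclideanSpace ℝ (Fin 3) :=
  WithLp.toLp 2 ![a 1 * b 2 - a 2 * b 1, a 2 * b 0 - a 0 * b 2, a 0 * b 1 - a 1 * b 0]

/-- The intrinsic (spherical) normal `η = γ × γ'` of a curve on the unit sphere. -/
noncomputable def sphNormal (γ : ℝ → EuclideanSpace ℝ (Fin 3)) (s : ℝ) :
    EuclideanSpace ℝ (Fin 3) :=
  cross3 (γ s) (deriv γ s)

/-- The geodesic curvature `k_g = ⟨γ'', η⟩` of a unit-speed curve on the unit sphere. -/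
noncomputable def geodCurv (γ : ℝ → EuclideanSpace ℝ (Fin 3)) (s : ℝ) : ℝ :=
  ⟪deriv (deriv γ) s, sphNormal γ s⟫

lemma cont_geodCurv (γ : ℝ → EuclideanSpace ℝ (Fin 3)) (hγ : ContDiff ℝ (⊤ : ℕ∞) γ) :
    Continuous (geodCurv γ) := by
  have h0 : ContDiff ℝ ((⊤:ℕ∞) : WithTop ℕ∞) γ := hγ.of_le (by simp)
  have h1 : ContDiff ℝ ((⊤:ℕ∞) : WithTop ℕ∞) (deriv γ) := (contDiff_infty_iff_deriv.mp h0).2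
  have h2 : Continuous (deriv (deriv γ)) := (contDiff_infty_iff_deriv.mp h1).2.continuous
  have hc0 : Continuous γ := hγ.continuous
  have hc1 : Continuous (deriv γ) := h1.continuous
  have happ : ∀ (f : ℝ → EuclideanSpace ℝ (Fin 3)), Continuous f → ∀ i,
      Continuous (fun s => f s i) := fun f hf i => (continuous_apply i).comp ((PiLp.continuous_ofLp ..).comp hf)
  have hη : Continuous (sphNormal γ) := by
    unfold sphNormal cross3
    apply (PiLp.continuous_toLp ..).comp
    apply continuous_pi
    intro i
    fin_cases i <;>
      simp only [Matrix.cons_val_zero, Matrix.cons_val_one, Matrix.head_cons,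
        Matrix.cons_val_two, Matrix.tail_cons] <;>
      exact ((happ _ hc0 _).mul (happ _ hc1 _)).sub ((happ _ hc0 _).mul (happ _ hc1 _))
  unfold geodCurv
  exact h2.inner hη

theorem reverse_isoperimetric_sphere (L : ℝ) (hL : 0 < L)
    (γ : ℝ → EuclideanSpace ℝ (Fin 3)) (hγ : ContDiff ℝ (⊤ : ℕ∞) γ)
    (hper : Function.Periodic γ L)
    (hsph : ∀ s, ‖γ s‖ = 1) (hunit : ∀ s, ‖deriv γ s‖ = 1)
    (hkg : ∀ s, 0 < geodCurv γ s)
    (A : ℝ) (hA₀ : 0 < A) (hA₁ : A < 2 * Real.pi)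
    (hGB : ∫ s in (0:ℝ)..L, geodCurv γ s = 2 * Real.pi - A) :
    L ^ 2 - A * (4 * Real.pi - A)
      ≤ (∫ s in (0:ℝ)..L, Real.sqrt (1 + (geodCurv γ s) ^ 2)) ^ 2
        - 4 * Real.pi ^ 2 := by
  set k := geodCurv γ with hk
  have hkc : Continuous k := cont_geodCurv γ hγ
  set K : ℝ := 2 * Real.pi - A with hKdef
  have hK : 0 < K := by simp only [hKdef]; linarith
  set R : ℝ := Real.sqrt (L ^ 2 + K ^ 2) with hRdef
  have hR2 : R ^ 2 = L ^ 2 + K ^ 2 := Real.sq_sqrt (by positivity)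
  have hR : 0 < R := Real.sqrt_pos.mpr (by positivity)
  -- pointwise bound
  have hpt : ∀ s, (L + K * k s) / R ≤ Real.sqrt (1 + k s ^ 2) := by
    intro s
    have hks := hkg s
    rw [div_le_iff₀ hR]
    have h1 : (L + K * k s) ^ 2 ≤ (1 + k s ^ 2) * R ^ 2 := by
      rw [hR2]; nlinarith [sq_nonneg (K - L * k s)]
    have h2 : Real.sqrt (1 + k s ^ 2) * R = Real.sqrt ((1 + k s ^ 2) * R ^ 2) := by
      rw [Real.sqrt_mul (by positivity), Real.sqrt_sq hR.le]
    rw [h2]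
    calc L + K * k s ≤ |L + K * k s| := le_abs_self _
      _ = Real.sqrt ((L + K * k s) ^ 2) := (Real.sqrt_sq_eq_abs _).symm
      _ ≤ Real.sqrt ((1 + k s ^ 2) * R ^ 2) := Real.sqrt_le_sqrt h1
  -- integrate
  have hint1 : IntervalIntegrable (fun s => (L + K * k s) / R) MeasureTheory.volume 0 L :=
    (Continuous.intervalIntegrable (by continuity) 0 L)
  have hint2 : IntervalIntegrable (fun s => Real.sqrt (1 + k s ^ 2)) MeasureTheory.volume 0 L :=
    (Continuous.intervalIntegrable (by continuity) 0 L)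
  have hmono : (∫ s in (0:ℝ)..L, (L + K * k s) / R)
      ≤ ∫ s in (0:ℝ)..L, Real.sqrt (1 + k s ^ 2) :=
    intervalIntegral.integral_mono_on hL.le hint1 hint2 (fun s _ => hpt s)
  have hval : (∫ s in (0:ℝ)..L, (L + K * k s) / R) = R := by
    have hik : IntervalIntegrable k MeasureTheory.volume 0 L :=
      hkc.intervalIntegrable 0 L
    have : (∫ s in (0:ℝ)..L, (L + K * k s) / R)
        = (∫ s in (0:ℝ)..L, (L + K * k s)) / R := by
      rw [intervalIntegral.integral_div]
    rw [this, intervalIntegral.integral_add (intervalIntegrable_const) (hik.const_mul K),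
      intervalIntegral.integral_const, intervalIntegral.integral_const_mul, hGB]
    simp only [smul_eq_mul, sub_zero]
    field_simp
    nlinarith [hR2]
  have hIR : R ≤ ∫ s in (0:ℝ)..L, Real.sqrt (1 + k s ^ 2) := hval ▸ hmono
  have hsq : R ^ 2 ≤ (∫ s in (0:ℝ)..L, Real.sqrt (1 + k s ^ 2)) ^ 2 :=
    pow_le_pow_left₀ hR.le hIR 2
  rw [hR2] at hsq
  simp only [hKdef] at hsq
  nlinarith [hsq]
end

section
/- Let γ : ℝ → ℝ³ be a smooth curve with ‖γ(s)‖ = 1 and ‖γ'(s)‖ = 1 for all s, define η(s) := γ(s) × γ'(s) and k_g(s) := ⟨γ''(s), η(s)⟩, and define the spherical evolute E(s) := (k_g(s)·γ(s) + η(s)) / sqrt(1 + k_g(s)²). Then for all s, E'(s) = ( k_g'(s) / (1 + k_g(s)²)^{3/2} ) · ( γ(s) − k_g(s)·η(s) ). -/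
open scoped RealInnerProductSpace ContDiff

/-- The spherical evolute `E = (k_g γ + η) / √(1 + k_g²)` of a convex spherical curve. -/
noncomputable def sphEvolute (γ : ℝ → EuclideanSpace ℝ (Fin 3)) (s : ℝ) :
    EuclideanSpace ℝ (Fin 3) :=
  (Real.sqrt (1 + (geodCurv γ s) ^ 2))⁻¹ • (geodCurv γ s • γ s + sphNormal γ s)

/-- Expansion key: if a, b orthonormal, c ⊥ b, ⟨a,c⟩ = -1, then a × c = -⟨c, a×b⟩ b,
componentwise. -/
lemma cross_key (a0 a1 a2 b0 b1 b2 c0 c1 c2 : ℝ)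
    (hA : a0^2+a1^2+a2^2 = 1) (hB : b0^2+b1^2+b2^2 = 1)
    (hC : a0*b0+a1*b1+a2*b2 = 0) (hBC : b0*c0+b1*c1+b2*c2 = 0)
    (hAC : a0*c0+a1*c1+a2*c2 = -1) :
    a1*c2 - a2*c1 = -(c0*(a1*b2-a2*b1)+c1*(a2*b0-a0*b2)+c2*(a0*b1-a1*b0)) * b0
    ∧ a2*c0 - a0*c2 = -(c0*(a1*b2-a2*b1)+c1*(a2*b0-a0*b2)+c2*(a0*b1-a1*b0)) * b1
    ∧ a0*c1 - a1*c0 = -(c0*(a1*b2-a2*b1)+c1*(a2*b0-a0*b2)+c2*(a0*b1-a1*b0)) * b2 := by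
  refine ⟨?_, ?_, ?_⟩
  · have I : (a1*c2 - a2*c1) *
        ((a0^2+a1^2+a2^2)*(b0^2+b1^2+b2^2) - (a0*b0+a1*b1+a2*b2)^2)
        = (a1*b2-a2*b1) * ((a0^2+a1^2+a2^2)*(b0*c0+b1*c1+b2*c2)
            - (a0*c0+a1*c1+a2*c2)*(a0*b0+a1*b1+a2*b2))
          - (c0*(a1*b2-a2*b1)+c1*(a2*b0-a0*b2)+c2*(a0*b1-a1*b0))
              * (b0*(a0^2+a1^2+a2^2) - a0*(a0*b0+a1*b1+a2*b2)) := by ring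
    rw [hA, hB, hC, hBC, hAC] at I
    linear_combination I
  · have I : (a2*c0 - a0*c2) *
        ((a0^2+a1^2+a2^2)*(b0^2+b1^2+b2^2) - (a0*b0+a1*b1+a2*b2)^2)
        = (a2*b0-a0*b2) * ((a0^2+a1^2+a2^2)*(b0*c0+b1*c1+b2*c2)
            - (a0*c0+a1*c1+a2*c2)*(a0*b0+a1*b1+a2*b2))
          - (c0*(a1*b2-a2*b1)+c1*(a2*b0-a0*b2)+c2*(a0*b1-a1*b0))
              * (b1*(a0^2+a1^2+a2^2) - a1*(a0*b0+a1*b1+a2*b2)) := by ring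
    rw [hA, hB, hC, hBC, hAC] at I
    linear_combination I
  · have I : (a0*c1 - a1*c0) *
        ((a0^2+a1^2+a2^2)*(b0^2+b1^2+b2^2) - (a0*b0+a1*b1+a2*b2)^2)
        = (a0*b1-a1*b0) * ((a0^2+a1^2+a2^2)*(b0*c0+b1*c1+b2*c2)
            - (a0*c0+a1*c1+a2*c2)*(a0*b0+a1*b1+a2*b2))
          - (c0*(a1*b2-a2*b1)+c1*(a2*b0-a0*b2)+c2*(a0*b1-a1*b0))
              * (b2*(a0^2+a1^2+a2^2) - a2*(a0*b0+a1*b1+a2*b2)) := by ring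
    rw [hA, hB, hC, hBC, hAC] at I
    linear_combination I

lemma inner_eq3 (x y : EuclideanSpace ℝ (Fin 3)) :
    ⟪x, y⟫ = x 0 * y 0 + x 1 * y 1 + x 2 * y 2 := by
  simp [PiLp.inner_apply, RCLike.inner_apply, Fin.sum_univ_three]; ring

lemma hasDerivAt_proj {f : ℝ → EuclideanSpace ℝ (Fin 3)} {v : EuclideanSpace ℝ (Fin 3)}
    {s : ℝ} (i : Fin 3) (hf : HasDerivAt f v s) :
    HasDerivAt (fun t => f t i) (v i) s := by
  have := (EuclideanSpace.proj (𝕜 := ℝ) i).hasFDerivAt.comp_hasDerivAt s hf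
  exact this

lemma hasDerivAt_ofPi {f : ℝ → EuclideanSpace ℝ (Fin 3)} {v : EuclideanSpace ℝ (Fin 3)}
    {s : ℝ} (h : ∀ i, HasDerivAt (fun t => f t i) (v i) s) :
    HasDerivAt f v s := by
  have h' : HasDerivAt (fun t => (fun i => f t i : Fin 3 → ℝ)) (fun i => v i) s :=
    hasDerivAt_pi.2 h
  exact ((PiLp.continuousLinearEquiv 2 ℝ (fun _ : Fin 3 => ℝ)).symm.toContinuousLinearMap
    |>.hasFDerivAt.comp_hasDerivAt s h')

theorem deriv_sphEvolute
    (γ : ℝ → EuclideanSpace ℝ (Fin 3)) (hγ : ContDiff ℝ (⊤ : ℕ∞) γ)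
    (hsph : ∀ s, ‖γ s‖ = 1) (hunit : ∀ s, ‖deriv γ s‖ = 1) :
    ∀ s : ℝ,
      deriv (sphEvolute γ) s
        = (deriv (geodCurv γ) s / (1 + (geodCurv γ s) ^ 2) ^ ((3:ℝ)/2)) •
            (γ s - geodCurv γ s • sphNormal γ s) := by
  have hγ0 : ContDiff ℝ (∞ : WithTop ℕ∞) γ := hγ.of_le (by simp)
  have hγ1 : ContDiff ℝ (∞ : WithTop ℕ∞) (deriv γ) := (contDiff_infty_iff_deriv.mp hγ0).2
  have hγ2 : ContDiff ℝ (∞ : WithTop ℕ∞) (deriv (deriv γ)) := (contDiff_infty_iff_deriv.mp hγ1).2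
  have hdγ : ∀ s, HasDerivAt γ (deriv γ s) s := fun s =>
    ((hγ0.differentiable (by simp)) s).hasDerivAt
  have hdγ' : ∀ s, HasDerivAt (deriv γ) (deriv (deriv γ) s) s := fun s =>
    ((hγ1.differentiable (by simp)) s).hasDerivAt
  have hdγ'' : ∀ s, HasDerivAt (deriv (deriv γ)) (deriv (deriv (deriv γ)) s) s := fun s =>
    ((hγ2.differentiable (by simp)) s).hasDerivAt
  have hAA : ∀ s, ⟪γ s, γ s⟫ = 1 := fun s => by
    rw [real_inner_self_eq_norm_sq, hsph s]; norm_num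
  have hBB : ∀ s, ⟪deriv γ s, deriv γ s⟫ = 1 := fun s => by
    rw [real_inner_self_eq_norm_sq, hunit s]; norm_num
  have hAB : ∀ s, ⟪γ s, deriv γ s⟫ = 0 := by
    intro s
    have h1 : HasDerivAt (fun t => ⟪γ t, γ t⟫)
        (⟪γ s, deriv γ s⟫ + ⟪deriv γ s, γ s⟫) s := (hdγ s).inner ℝ (hdγ s)
    have h2 : HasDerivAt (fun t => ⟪γ t, γ t⟫) 0 s := by
      have : (fun t => (⟪γ t, γ t⟫ : ℝ)) = fun _ => 1 := funext hAA
      rw [this]; exact hasDerivAt_const s 1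
    have := h1.unique h2
    have h3 := real_inner_comm (deriv γ s) (γ s)
    linarith
  have hBC : ∀ s, ⟪deriv γ s, deriv (deriv γ) s⟫ = 0 := by
    intro s
    have h1 : HasDerivAt (fun t => ⟪deriv γ t, deriv γ t⟫)
        (⟪deriv γ s, deriv (deriv γ) s⟫ + ⟪deriv (deriv γ) s, deriv γ s⟫) s :=
      (hdγ' s).inner ℝ (hdγ' s)
    have h2 : HasDerivAt (fun t => ⟪deriv γ t, deriv γ t⟫) 0 s := by
      have : (fun t => (⟪deriv γ t, deriv γ t⟫ : ℝ)) = fun _ => 1 := funext hBB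
      rw [this]; exact hasDerivAt_const s 1
    have := h1.unique h2
    have h3 := real_inner_comm (deriv (deriv γ) s) (deriv γ s)
    linarith
  have hAC : ∀ s, ⟪γ s, deriv (deriv γ) s⟫ = -1 := by
    intro s
    have h1 : HasDerivAt (fun t => ⟪γ t, deriv γ t⟫)
        (⟪γ s, deriv (deriv γ) s⟫ + ⟪deriv γ s, deriv γ s⟫) s :=
      (hdγ s).inner ℝ (hdγ' s)
    have h2 : HasDerivAt (fun t => ⟪γ t, deriv γ t⟫) 0 s := by
      have : (fun t => (⟪γ t, deriv γ t⟫ : ℝ)) = fun _ => 0 := funext hAB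
      rw [this]; exact hasDerivAt_const s 0
    have := h1.unique h2
    rw [hBB s] at this
    linarith
  -- derivative of the spherical normal
  have hηd : ∀ s, HasDerivAt (sphNormal γ) (cross3 (γ s) (deriv (deriv γ) s)) s := by
    intro s
    have ha0 := hasDerivAt_proj 0 (hdγ s)
    have ha1 := hasDerivAt_proj 1 (hdγ s)
    have ha2 := hasDerivAt_proj 2 (hdγ s)
    have hb0 := hasDerivAt_proj 0 (hdγ' s)
    have hb1 := hasDerivAt_proj 1 (hdγ' s)
    have hb2 := hasDerivAt_proj 2 (hdγ' s)
    have H0 : HasDerivAt (fun t => sphNormal γ t 0) (cross3 (γ s) (deriv (deriv γ) s) 0) s := by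
      have e : (fun t => sphNormal γ t 0)
          = fun t => γ t 1 * deriv γ t 2 - γ t 2 * deriv γ t 1 := by
        funext t; simp [sphNormal, cross3]
      rw [e]
      have h := (ha1.mul hb2).sub (ha2.mul hb1)
      refine h.congr_deriv ?_
      simp [cross3]; ring
    have H1 : HasDerivAt (fun t => sphNormal γ t 1) (cross3 (γ s) (deriv (deriv γ) s) 1) s := by
      have e : (fun t => sphNormal γ t 1)
          = fun t => γ t 2 * deriv γ t 0 - γ t 0 * deriv γ t 2 := by
        funext t; simp [sphNormal, cross3]
      rw [e]
      have h := (ha2.mul hb0).sub (ha0.mul hb2)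
      refine h.congr_deriv ?_
      simp [cross3]; ring
    have H2 : HasDerivAt (fun t => sphNormal γ t 2) (cross3 (γ s) (deriv (deriv γ) s) 2) s := by
      have e : (fun t => sphNormal γ t 2)
          = fun t => γ t 0 * deriv γ t 1 - γ t 1 * deriv γ t 0 := by
        funext t; simp [sphNormal, cross3]
      rw [e]
      have h := (ha0.mul hb1).sub (ha1.mul hb0)
      refine h.congr_deriv ?_
      simp [cross3]; ring
    apply hasDerivAt_ofPi
    intro i
    fin_cases i
    · exact H0
    · exact H1
    · exact H2
  -- differentiability of geodesic curvature
  have hkdiff : ∀ s, DifferentiableAt ℝ (geodCurv γ) s := by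
    intro s
    have : DifferentiableAt ℝ (fun t => ⟪deriv (deriv γ) t, sphNormal γ t⟫) s :=
      DifferentiableAt.inner ℝ (hdγ'' s).differentiableAt (hηd s).differentiableAt
    exact this
  -- the key Frenet fact : γ × γ'' = -k γ'
  have hF2 : ∀ s, cross3 (γ s) (deriv (deriv γ) s) = (-(geodCurv γ s)) • deriv γ s := by
    intro s
    have hA' := hAA s; have hB' := hBB s; have hC' := hAB s
    have hBC' := hBC s; have hAC' := hAC s
    rw [inner_eq3] at hA' hB' hC' hBC' hAC'
    have key := cross_key (γ s 0) (γ s 1) (γ s 2) (deriv γ s 0) (deriv γ s 1) (deriv γ s 2)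
      (deriv (deriv γ) s 0) (deriv (deriv γ) s 1) (deriv (deriv γ) s 2)
      (by linarith [hA']) (by linarith [hB']) (by linarith [hC'])
      (by linear_combination hBC') (by linear_combination hAC')
    have hk : geodCurv γ s
        = deriv (deriv γ) s 0 * (γ s 1 * deriv γ s 2 - γ s 2 * deriv γ s 1)
        + deriv (deriv γ) s 1 * (γ s 2 * deriv γ s 0 - γ s 0 * deriv γ s 2)
        + deriv (deriv γ) s 2 * (γ s 0 * deriv γ s 1 - γ s 1 * deriv γ s 0) := by
      rw [geodCurv, inner_eq3]; simp [sphNormal, cross3]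
    ext i
    fin_cases i
    · simpa [cross3, hk, PiLp.smul_apply, smul_eq_mul] using
        (by linear_combination key.1 : γ s 1 * deriv (deriv γ) s 2 - γ s 2 * deriv (deriv γ) s 1
          = -(deriv (deriv γ) s 0 * (γ s 1 * deriv γ s 2 - γ s 2 * deriv γ s 1)
            + deriv (deriv γ) s 1 * (γ s 2 * deriv γ s 0 - γ s 0 * deriv γ s 2)
            + deriv (deriv γ) s 2 * (γ s 0 * deriv γ s 1 - γ s 1 * deriv γ s 0)) * deriv γ s 0)
    · simpa [cross3, hk, PiLp.smul_apply, smul_eq_mul] using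
        (by linear_combination key.2.1 : γ s 2 * deriv (deriv γ) s 0 - γ s 0 * deriv (deriv γ) s 2
          = -(deriv (deriv γ) s 0 * (γ s 1 * deriv γ s 2 - γ s 2 * deriv γ s 1)
            + deriv (deriv γ) s 1 * (γ s 2 * deriv γ s 0 - γ s 0 * deriv γ s 2)
            + deriv (deriv γ) s 2 * (γ s 0 * deriv γ s 1 - γ s 1 * deriv γ s 0)) * deriv γ s 1)
    · simpa [cross3, hk, PiLp.smul_apply, smul_eq_mul] using
        (by linear_combination key.2.2 : γ s 0 * deriv (deriv γ) s 1 - γ s 1 * deriv (deriv γ) s 0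
          = -(deriv (deriv γ) s 0 * (γ s 1 * deriv γ s 2 - γ s 2 * deriv γ s 1)
            + deriv (deriv γ) s 1 * (γ s 2 * deriv γ s 0 - γ s 0 * deriv γ s 2)
            + deriv (deriv γ) s 2 * (γ s 0 * deriv γ s 1 - γ s 1 * deriv γ s 0)) * deriv γ s 2)
  -- main computation
  intro s
  set k : ℝ := geodCurv γ s with hkdef
  set k' : ℝ := deriv (geodCurv γ) s with hk'def
  have hk : HasDerivAt (geodCurv γ) k' s := (hkdiff s).hasDerivAt
  have hη' : HasDerivAt (sphNormal γ) ((-k) • deriv γ s) s := by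
    have := hηd s; rwa [hF2 s] at this
  have hV : HasDerivAt (fun t => geodCurv γ t • γ t + sphNormal γ t) (k' • γ s) s := by
    have h1 : HasDerivAt (fun t => geodCurv γ t • γ t)
        (k • deriv γ s + k' • γ s) s := hk.smul (hdγ s)
    have h2 := h1.add hη'
    refine h2.congr_deriv ?_
    module
  have hRpos : (0:ℝ) < 1 + k ^ 2 := by positivity
  have hsqrtpos : (0:ℝ) < Real.sqrt (1 + k ^ 2) := Real.sqrt_pos.mpr hRpos
  have hq : HasDerivAt (fun t => 1 + geodCurv γ t ^ 2) (2 * k * k') s := by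
    have := (hk.pow 2).const_add (1:ℝ)
    refine this.congr_deriv ?_
    norm_num
    exact Or.inl rfl
  have hs : HasDerivAt (fun t => Real.sqrt (1 + geodCurv γ t ^ 2))
      (1 / (2 * Real.sqrt (1 + k ^ 2)) * (2 * k * k')) s :=
    (Real.hasDerivAt_sqrt (ne_of_gt hRpos)).comp s hq
  have hinv : HasDerivAt (fun t => (Real.sqrt (1 + geodCurv γ t ^ 2))⁻¹)
      (-(1 / (2 * Real.sqrt (1 + k ^ 2)) * (2 * k * k')) / (Real.sqrt (1 + k ^ 2)) ^ 2) s :=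
    hs.inv (ne_of_gt hsqrtpos)
  have hE : HasDerivAt (sphEvolute γ)
      ((Real.sqrt (1 + k ^ 2))⁻¹ • (k' • γ s)
        + (-(1 / (2 * Real.sqrt (1 + k ^ 2)) * (2 * k * k')) / (Real.sqrt (1 + k ^ 2)) ^ 2)
            • (k • γ s + sphNormal γ s)) s := by
    have := hinv.smul hV
    exact this
  rw [hE.deriv]
  have hsq : Real.sqrt (1 + k ^ 2) ^ 2 = 1 + k ^ 2 := Real.sq_sqrt hRpos.le
  have hr32 : (1 + k ^ 2) ^ ((3:ℝ)/2) = (1 + k ^ 2) * Real.sqrt (1 + k ^ 2) := by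
    rw [Real.sqrt_eq_rpow, ← Real.rpow_one_add' (by positivity) (by norm_num)]
    norm_num
  have hns : Real.sqrt (1 + k ^ 2) ≠ 0 := ne_of_gt hsqrtpos
  match_scalars
  · rw [hr32]; field_simp
    rw [hsq]; ring
  · rw [hr32]; field_simp
    rw [hsq]
end

section
/- Let f : ℝ → ℝ be a smooth 2π-periodic function with ∫₀^{2π} f(θ) dθ = 0. Then equality ∫₀^{2π} f'(θ)² dθ − ∫₀^{2π} f(θ)² dθ = (1/4)( ∫₀^{2π} f''(θ)² dθ − ∫₀^{2π} f'(θ)² dθ ) holds if and only if there exist real numbers a₁, b₁, a₂, b₂ such that f(θ) = a₁ cos θ + b₁ sin θ + a₂ cos 2θ + b₂ sin 2θ for all θ. -/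
section PartA
open Real MeasureTheory intervalIntegral Function Set

private lemma trig_sq_integral (A B C D : ℝ) :
    ∫ θ in (0:ℝ)..(2 * π), (A * cos θ + B * sin θ + C * cos (2*θ) + D * sin (2*θ))^2
      = π * (A^2 + B^2 + C^2 + D^2) := by
  have hG : ∀ θ : ℝ, HasDerivAt (fun θ : ℝ =>
      (A^2+B^2+C^2+D^2) * θ / 2 + (A^2-B^2) * (sin θ * cos θ) / 2
      + (C^2-D^2) * (sin (2*θ) * cos (2*θ)) / 4 + A*B*(sin θ)^2
      + A*C*(sin (3*θ)/3 + sin θ) + A*D*(-(cos (3*θ))/3 - cos θ)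
      + B*C*(-(cos (3*θ))/3 + cos θ) + B*D*(4/3)*(sin θ)^3
      + C*D*(sin (2*θ))^2/2)
      ((A * cos θ + B * sin θ + C * cos (2*θ) + D * sin (2*θ))^2) θ := by
    intro θ
    have h2 : HasDerivAt (fun θ : ℝ => 2*θ) 2 θ := by
      simpa using (hasDerivAt_id θ).const_mul (2:ℝ)
    have h3 : HasDerivAt (fun θ : ℝ => 3*θ) 3 θ := by
      simpa using (hasDerivAt_id θ).const_mul (3:ℝ)
    have hs2 : HasDerivAt (fun θ : ℝ => sin (2*θ)) (cos (2*θ) * 2) θ :=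
      (Real.hasDerivAt_sin (2*θ)).comp θ h2
    have hc2 : HasDerivAt (fun θ : ℝ => cos (2*θ)) (-sin (2*θ) * 2) θ :=
      (Real.hasDerivAt_cos (2*θ)).comp θ h2
    have hs3 : HasDerivAt (fun θ : ℝ => sin (3*θ)) (cos (3*θ) * 3) θ :=
      (Real.hasDerivAt_sin (3*θ)).comp θ h3
    have hc3 : HasDerivAt (fun θ : ℝ => cos (3*θ)) (-sin (3*θ) * 3) θ :=
      (Real.hasDerivAt_cos (3*θ)).comp θ h3
    have hs := Real.hasDerivAt_sin θ
    have hc := Real.hasDerivAt_cos θ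
    have H := ((((((((((hasDerivAt_id θ).const_mul ((A^2+B^2+C^2+D^2))).div_const 2).add
        ((((hs.mul hc).const_mul (A^2-B^2)).div_const 2))).add
        (((hs2.mul hc2).const_mul (C^2-D^2)).div_const 4)).add
        (((hs.pow 2)).const_mul (A*B))).add
        (((hs3.div_const 3).add hs).const_mul (A*C))).add
        ((((hc3.div_const 3).neg).sub hc).const_mul (A*D))).add
        (((((hc3.div_const 3).neg).add hc)).const_mul (B*C))).add
        (((hs.pow 3).const_mul (B*D*(4/3))))).add
        (((hs2.pow 2).const_mul (C*D)).div_const 2)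
    have Hd : HasDerivAt (fun θ : ℝ =>
      (A^2+B^2+C^2+D^2) * θ / 2 + (A^2-B^2) * (sin θ * cos θ) / 2
      + (C^2-D^2) * (sin (2*θ) * cos (2*θ)) / 4 + A*B*(sin θ)^2
      + A*C*(sin (3*θ)/3 + sin θ) + A*D*(-(cos (3*θ))/3 - cos θ)
      + B*C*(-(cos (3*θ))/3 + cos θ) + B*D*(4/3)*(sin θ)^3
      + C*D*(sin (2*θ))^2/2)
      ((A ^ 2 + B ^ 2 + C ^ 2 + D ^ 2) * 1 / 2 + (A ^ 2 - B ^ 2) * (cos θ * cos θ + sin θ * -sin θ) / 2 +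
                  (C ^ 2 - D ^ 2) * (cos (2 * θ) * 2 * cos (2 * θ) + sin (2 * θ) * (-sin (2 * θ) * 2)) / 4 +
                A * B * ((2:ℕ) * sin θ ^ (2 - 1) * cos θ) +
              A * C * (cos (3 * θ) * 3 / 3 + cos θ) +
            A * D * (-(-sin (3 * θ) * 3 / 3) - -sin θ) +
          B * C * (-(-sin (3 * θ) * 3 / 3) + -sin θ) +
        B * D * (4 / 3) * ((3:ℕ) * sin θ ^ (3 - 1) * cos θ) +
      C * D * ((2:ℕ) * sin (2 * θ) ^ (2 - 1) * (cos (2 * θ) * 2)) / 2) θ := by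
      convert H using 2 with x
      case e'_8 => simp only [Pi.add_apply, Pi.sub_apply, Pi.neg_apply, Pi.mul_apply, Pi.pow_apply, id_eq]; ring
      all_goals rfl
    convert Hd using 1
    have e2c : cos (2*θ) = 2 * cos θ^2 - 1 := by rw [Real.cos_two_mul]
    have e2s : sin (2*θ) = 2 * sin θ * cos θ := by rw [Real.sin_two_mul]
    have e3c : cos (3*θ) = cos (2*θ) * cos θ - sin (2*θ) * sin θ := by
      rw [show (3:ℝ)*θ = 2*θ + θ by ring, Real.cos_add]
    have e3s : sin (3*θ) = sin (2*θ) * cos θ + cos (2*θ) * sin θ := by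
      rw [show (3:ℝ)*θ = 2*θ + θ by ring, Real.sin_add]
    rw [e3c, e3s, e2c, e2s]
    have hpyth := Real.sin_sq_add_cos_sq θ
    linear_combination (A^2/2 + B^2/2 + 2*C^2*(cos θ)^2 + 2*D^2*(cos θ)^2 + 2*A*C*(cos θ)) * hpyth
  rw [integral_eq_sub_of_hasDerivAt (fun θ _ => hG θ) (by
      apply Continuous.intervalIntegrable; fun_prop)]
  have s4 : Real.sin (2*(2*π)) = 0 := by
    rw [show (2:ℝ)*(2*π) = (4:ℕ)*π by push_cast; ring]; exact Real.sin_nat_mul_pi 4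
  have c4 : Real.cos (2*(2*π)) = 1 := by
    rw [show (2:ℝ)*(2*π) = (2:ℕ)*(2*π) by push_cast; ring]; exact Real.cos_nat_mul_two_pi 2
  have s6 : Real.sin (3*(2*π)) = 0 := by
    rw [show (3:ℝ)*(2*π) = (6:ℕ)*π by push_cast; ring]; exact Real.sin_nat_mul_pi 6
  have c6 : Real.cos (3*(2*π)) = 1 := by
    rw [show (3:ℝ)*(2*π) = (3:ℕ)*(2*π) by push_cast; ring]; exact Real.cos_nat_mul_two_pi 3
  simp only [s4, c4, s6, c6, Real.sin_two_pi, Real.cos_two_pi, mul_zero, zero_mul, Real.sin_zero,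
    Real.cos_zero]
  ring


private lemma trig_hasDeriv (A B C D : ℝ) (θ : ℝ) :
    HasDerivAt (fun θ : ℝ => A * cos θ + B * sin θ + C * cos (2*θ) + D * sin (2*θ))
      (B * cos θ + (-A) * sin θ + (2*D) * cos (2*θ) + (-(2*C)) * sin (2*θ)) θ := by
  have h2 : HasDerivAt (fun θ : ℝ => 2*θ) 2 θ := by
    simpa using (hasDerivAt_id θ).const_mul (2:ℝ)
  have hs2 : HasDerivAt (fun θ : ℝ => sin (2*θ)) (cos (2*θ) * 2) θ :=
    (Real.hasDerivAt_sin (2*θ)).comp θ h2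
  have hc2 : HasDerivAt (fun θ : ℝ => cos (2*θ)) (-sin (2*θ) * 2) θ :=
    (Real.hasDerivAt_cos (2*θ)).comp θ h2
  have H := ((((Real.hasDerivAt_cos θ).const_mul A).add
      ((Real.hasDerivAt_sin θ).const_mul B)).add (hc2.const_mul C)).add (hs2.const_mul D)
  have : A * -sin θ + B * cos θ + C * (-sin (2*θ) * 2) + D * (cos (2*θ) * 2)
      = B * cos θ + (-A) * sin θ + (2*D) * cos (2*θ) + (-(2*C)) * sin (2*θ) := by ring
  exact this ▸ H

private lemma reverse_direction (f : ℝ → ℝ) (a₁ b₁ a₂ b₂ : ℝ)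
    (hf : ∀ θ : ℝ, f θ = a₁ * Real.cos θ + b₁ * Real.sin θ
            + a₂ * Real.cos (2 * θ) + b₂ * Real.sin (2 * θ)) :
    ((∫ θ in (0:ℝ)..(2 * Real.pi), (deriv f θ) ^ 2)
          - (∫ θ in (0:ℝ)..(2 * Real.pi), (f θ) ^ 2)
        = (1 / 4) * ((∫ θ in (0:ℝ)..(2 * Real.pi), (deriv (deriv f) θ) ^ 2)
            - ∫ θ in (0:ℝ)..(2 * Real.pi), (deriv f θ) ^ 2)) := by
  have hfe : f = fun θ => a₁ * cos θ + b₁ * sin θ + a₂ * cos (2*θ) + b₂ * sin (2*θ) :=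
    funext hf
  have hd1 : deriv f = fun θ => b₁ * cos θ + (-a₁) * sin θ + (2*b₂) * cos (2*θ)
      + (-(2*a₂)) * sin (2*θ) := by
    funext θ; rw [hfe]; exact (trig_hasDeriv a₁ b₁ a₂ b₂ θ).deriv
  have hd2 : deriv (deriv f) = fun θ => (-a₁) * cos θ + (-b₁) * sin θ
      + (-(4*a₂)) * cos (2*θ) + (-(4*b₂)) * sin (2*θ) := by
    funext θ; rw [hd1]
    have H := (trig_hasDeriv b₁ (-a₁) (2*b₂) (-(2*a₂)) θ).deriv
    rw [H]; ring
  rw [hd2, hd1, hfe]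
  beta_reduce
  rw [trig_sq_integral, trig_sq_integral, trig_sq_integral]
  ring

end PartA

section PartB
open Real MeasureTheory intervalIntegral Function Set AddCircle Complex ContinuousMap

private instance fact_two_pi_pos : Fact ((0:ℝ) < 2 * π) := ⟨Real.two_pi_pos⟩

private lemma lift_continuous {g : ℝ → ℂ} (hg : Continuous g) (hper : Function.Periodic g (2*π)) :
    Continuous hper.lift := by
  exact hg.quotient_liftOn' _

private lemma coeff_lift_eq {g : ℝ → ℂ} (hper : Function.Periodic g (2*π)) (n : ℤ) :
    fourierCoeff hper.lift n = fourierCoeffOn Real.two_pi_pos g n := by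
  rw [fourierCoeff_eq_intervalIntegral _ n 0, fourierCoeffOn_eq_integral]
  simp_rw [fourier_coe_apply, Function.Periodic.lift_coe, zero_add, sub_zero]

private lemma coeff_deriv {g g' : ℝ → ℝ} (hdiff : ∀ x, HasDerivAt g (g' x) x)
    (hcont : Continuous g') (hper : Function.Periodic g (2*π)) (n : ℤ) :
    fourierCoeffOn Real.two_pi_pos (fun x => (g' x : ℂ)) n
      = Complex.I * n * fourierCoeffOn Real.two_pi_pos (fun x => (g x : ℂ)) n := by
  have hint : IntervalIntegrable (fun x => (g' x : ℂ)) volume 0 (2*π) :=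
    (Complex.continuous_ofReal.comp hcont).intervalIntegrable _ _
  have hg2pi : g (2*π) = g 0 := by simpa using (hper 0)
  rcases eq_or_ne n 0 with rfl | hn
  · rw [fourierCoeffOn_eq_integral]
    have : ∫ x in (0:ℝ)..(2*π), fourier (-(0:ℤ)) (x : AddCircle (2*π - 0)) • ((g' x : ℂ))
        = ((g (2*π) : ℂ)) - ((g 0 : ℂ)) := by
      rw [intervalIntegral.integral_congr (g := fun x => ((g' x : ℂ)))
        (fun x _ => by simp)]
      exact integral_eq_sub_of_hasDerivAt (fun x _ => (hdiff x).ofReal_comp) hint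
    rw [this, hg2pi]
    simp
  · have key := fourierCoeffOn_of_hasDerivAt Real.two_pi_pos hn
      (f := fun x => ((g x : ℂ))) (f' := fun x => ((g' x : ℂ)))
      (fun x _ => (hdiff x).ofReal_comp) hint
    have h0 : fourier (-n) ((0:ℝ) : AddCircle (2*π - 0)) = 1 := by
      norm_num [fourier_eval_zero]
    simp only [h0, one_mul] at key
    rw [show ((fun x => ((g x : ℂ))) (2*π) - (fun x => ((g x : ℂ))) 0) = 0 by
      simp [hg2pi], zero_sub] at key
    have hπ : (π:ℂ) ≠ 0 := Complex.ofReal_ne_zero.mpr Real.pi_ne_zero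
    have hnn : (n:ℂ) ≠ 0 := Int.cast_ne_zero.mpr hn
    field_simp at key
    have h2π : (2:ℂ) * (π:ℂ) ≠ 0 := by
      simp [hπ]
    apply mul_left_cancel₀ h2π
    push_cast at key
    linear_combination -key




private lemma parseval_periodic {g : ℝ → ℝ} (hg : Continuous g)
    (hper : Function.Periodic g (2*π)) :
    Summable (fun n : ℤ => ‖fourierCoeffOn Real.two_pi_pos (fun x => (g x : ℂ)) n‖^2) ∧
    (∫ θ in (0:ℝ)..(2*π), (g θ)^2)
      = 2*π * ∑' n : ℤ, ‖fourierCoeffOn Real.two_pi_pos (fun x => (g x : ℂ)) n‖^2 := by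
  have hperC : Function.Periodic (fun x : ℝ => ((g x : ℂ))) (2*π) := fun x => by simp [hper x]
  let G : C(AddCircle (2*π), ℂ) :=
    ⟨hperC.lift, lift_continuous (Complex.continuous_ofReal.comp hg) hperC⟩
  have hGcoe : ∀ x : ℝ, G ↑x = (g x : ℂ) := fun x => hperC.lift_coe x
  have hcoeff : ∀ n : ℤ, fourierCoeff (⇑G) n
      = fourierCoeffOn Real.two_pi_pos (fun x => (g x : ℂ)) n := fun n => coeff_lift_eq hperC n
  have P := tsum_sq_fourierCoeff (toLp (E := ℂ) 2 haarAddCircle ℂ G)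
  simp_rw [fourierCoeff_toLp] at P
  have hsum : Summable (fun n : ℤ => ‖fourierCoeff (⇑G) n‖^2) := by
    have h1 := lp.memℓp (fourierBasis.repr (toLp (E := ℂ) 2 haarAddCircle ℂ G))
    rw [memℓp_gen_iff (by norm_num)] at h1
    have : ∀ n : ℤ, ‖(fourierBasis.repr (toLp (E := ℂ) 2 haarAddCircle ℂ G)) n‖ ^ (ENNReal.toReal 2)
        = ‖fourierCoeff (⇑G) n‖^2 := by
      intro n
      rw [fourierBasis_repr, fourierCoeff_toLp]
      norm_num [Real.rpow_natCast]
    exact (summable_congr this).mp h1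
  have hR : ∫ t : AddCircle (2*π), ‖(toLp (E := ℂ) 2 haarAddCircle ℂ G) t‖^2 ∂haarAddCircle
      = ∫ t : AddCircle (2*π), ‖G t‖^2 ∂haarAddCircle := by
    refine integral_congr_ae ((ContinuousMap.coeFn_toLp (p := 2) (𝕜 := ℂ) haarAddCircle G).mono fun x hx => ?_)
    simp only [hx]
  have hI : (∫ θ in (0:ℝ)..(2*π), (g θ)^2)
      = 2*π * ∫ t : AddCircle (2*π), ‖G t‖^2 ∂haarAddCircle := by
    have h1 : ∫ θ in (0:ℝ)..(0 + 2*π), ‖G (θ : AddCircle (2*π))‖^2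
        = ∫ t : AddCircle (2*π), ‖G t‖^2 := AddCircle.intervalIntegral_preimage (2*π) 0 (fun b => ‖G b‖^2)
    have h2 : ∀ θ : ℝ, ‖G (θ : AddCircle (2*π))‖^2 = (g θ)^2 := by
      intro θ; rw [hGcoe θ, Complex.norm_real, Real.norm_eq_abs, _root_.sq_abs]
    have h3 : (volume : Measure (AddCircle (2*π)))
        = ENNReal.ofReal (2*π) • (haarAddCircle) := volume_eq_smul_haarAddCircle
    rw [zero_add] at h1
    simp_rw [h2] at h1
    rw [h1, h3, MeasureTheory.integral_smul_measure, ENNReal.toReal_ofReal Real.two_pi_pos.le]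
    simp
  refine ⟨by simpa only [hcoeff] using hsum, ?_⟩
  rw [hI, ← hR, ← P]
  simp_rw [hcoeff]




private lemma periodic_deriv' {g : ℝ → ℝ} (hper : Function.Periodic g (2*π)) :
    Function.Periodic (deriv g) (2*π) := by
  intro x
  have h : (fun y : ℝ => g (y + 2*π)) = g := funext hper
  calc deriv g (x + 2*π) = deriv (fun y => g (y + 2*π)) x := (deriv_comp_add_const g (2*π) x).symm
  _ = deriv g x := by rw [h]

private lemma coeff_nonneg (n : ℤ) : 0 ≤ ((n:ℝ)^2 - 1) * ((n:ℝ)^2 - 4) := by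
  have habs : ((n.natAbs : ℝ))^2 = ((n:ℝ))^2 := by
    rw [Nat.cast_natAbs, Int.cast_abs, _root_.sq_abs]
  rcases le_or_gt 3 n.natAbs with h | h
  · have h3 : (3:ℝ) ≤ (n.natAbs : ℝ) := by exact_mod_cast h
    have h9 : (9:ℝ) ≤ (n:ℝ)^2 := by nlinarith
    nlinarith
  · interval_cases hm : n.natAbs <;> (rw [← habs]; norm_num)

private lemma coeff_pos {n : ℤ} (h0 : n ≠ 0) (h1 : n ≠ 1) (h2 : n ≠ -1) (h3 : n ≠ 2)
    (h4 : n ≠ -2) : 0 < ((n:ℝ)^2 - 1) * ((n:ℝ)^2 - 4) := by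
  have habs : ((n.natAbs : ℝ))^2 = ((n:ℝ))^2 := by
    rw [Nat.cast_natAbs, Int.cast_abs, _root_.sq_abs]
  have h : 3 ≤ n.natAbs := by omega
  have h3 : (3:ℝ) ≤ (n.natAbs : ℝ) := by exact_mod_cast h
  have h9 : (9:ℝ) ≤ (n:ℝ)^2 := by nlinarith
  nlinarith

private lemma re_mul_exp (z : ℂ) (r : ℝ) :
    (z * Complex.exp ((r:ℂ) * Complex.I)).re = z.re * Real.cos r - z.im * Real.sin r := by
  rw [Complex.exp_mul_I]
  simp [Complex.mul_re, Complex.add_re, Complex.mul_im, Complex.I_re, Complex.I_im,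
    Complex.cos_ofReal_re, Complex.sin_ofReal_re, Complex.cos_ofReal_im, Complex.sin_ofReal_im]
  try ring

private lemma fourier_eq_exp (n : ℤ) (θ : ℝ) :
    fourier n (θ : AddCircle (2*π)) = Complex.exp ((((n:ℝ) * θ : ℝ) : ℂ) * Complex.I) := by
  rw [fourier_coe_apply]
  have hπ : (π:ℂ) ≠ 0 := Complex.ofReal_ne_zero.mpr Real.pi_ne_zero
  congr 1
  push_cast
  field_simp
  try ring

private lemma forward_direction (f : ℝ → ℝ)
    (hf : ContDiff ℝ (⊤ : ℕ∞) f) (hper : Function.Periodic f (2 * Real.pi))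
    (hmean : ∫ θ in (0:ℝ)..(2 * Real.pi), f θ = 0)
    (hE : (∫ θ in (0:ℝ)..(2 * Real.pi), (deriv f θ) ^ 2)
          - (∫ θ in (0:ℝ)..(2 * Real.pi), (f θ) ^ 2)
        = (1 / 4) * ((∫ θ in (0:ℝ)..(2 * Real.pi), (deriv (deriv f) θ) ^ 2)
            - ∫ θ in (0:ℝ)..(2 * Real.pi), (deriv f θ) ^ 2)) :
    ∃ a₁ b₁ a₂ b₂ : ℝ, ∀ θ : ℝ,
          f θ = a₁ * Real.cos θ + b₁ * Real.sin θ
            + a₂ * Real.cos (2 * θ) + b₂ * Real.sin (2 * θ) := by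
  have hfi : ContDiff ℝ (↑(⊤:ℕ∞)) f := hf.of_le (by simp)
  obtain ⟨hdf, hf1⟩ := contDiff_infty_iff_deriv.mp hfi
  obtain ⟨hdf1, hf2⟩ := contDiff_infty_iff_deriv.mp hf1
  have hper1 : Function.Periodic (deriv f) (2*π) := periodic_deriv' hper
  have hper2 : Function.Periodic (deriv (deriv f)) (2*π) := periodic_deriv' hper1
  set c : ℤ → ℂ := fun n => fourierCoeffOn Real.two_pi_pos (fun x => ((f x : ℝ) : ℂ)) n with hc
  set g : ℤ → ℝ := fun n => ‖c n‖^2 with hgdef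
  -- coefficients of derivatives
  have hd1 : ∀ n : ℤ, fourierCoeffOn Real.two_pi_pos (fun x => ((deriv f x : ℝ) : ℂ)) n
      = Complex.I * n * c n := fun n =>
    coeff_deriv (fun x => (hdf x).hasDerivAt) hf1.continuous hper n
  have hd2 : ∀ n : ℤ, fourierCoeffOn Real.two_pi_pos (fun x => ((deriv (deriv f) x : ℝ) : ℂ)) n
      = Complex.I * n * (Complex.I * n * c n) := fun n => by
    rw [coeff_deriv (fun x => (hdf1 x).hasDerivAt) hf2.continuous hper1 n,
      hd1 n]
  have hnorm : ∀ (n : ℤ) (z : ℂ), ‖Complex.I * (n:ℂ) * z‖^2 = (n:ℝ)^2 * ‖z‖^2 := by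
    intro n z
    rw [norm_mul, norm_mul, Complex.norm_I, one_mul, Complex.norm_intCast, mul_pow, _root_.sq_abs]
  -- Parseval
  obtain ⟨S0, P0⟩ := parseval_periodic hf.continuous hper
  obtain ⟨S1, P1⟩ := parseval_periodic hf1.continuous hper1
  obtain ⟨S2, P2⟩ := parseval_periodic hf2.continuous hper2
  simp_rw [show ∀ n : ℤ, ‖fourierCoeffOn Real.two_pi_pos (fun x => ((f x : ℝ) : ℂ)) n‖^2 = g n
    from fun n => rfl] at S0 P0
  have e1 : ∀ n : ℤ, ‖fourierCoeffOn Real.two_pi_pos (fun x => ((deriv f x : ℝ) : ℂ)) n‖^2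
      = (n:ℝ)^2 * g n := fun n => by rw [hd1 n, hnorm]
  have e2 : ∀ n : ℤ, ‖fourierCoeffOn Real.two_pi_pos (fun x => ((deriv (deriv f) x : ℝ) : ℂ)) n‖^2
      = (n:ℝ)^4 * g n := fun n => by
    rw [hd2 n, hnorm, hnorm]; ring
  simp_rw [e1] at S1 P1
  simp_rw [e2] at S2 P2
  -- from the equality hypothesis
  have key : ∑' n : ℤ, ((n:ℝ)^4 * g n) - 5 * ∑' n : ℤ, ((n:ℝ)^2 * g n)
      + 4 * ∑' n : ℤ, g n = 0 := by
    rw [P0, P1, P2] at hE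
    have hπ := Real.pi_ne_zero
    apply mul_left_cancel₀ hπ
    rw [mul_zero]
    linear_combination (-2 : ℝ) * hE
  have hSsum : Summable (fun n : ℤ => ((n:ℝ)^2 - 1) * ((n:ℝ)^2 - 4) * g n) := by
    have := (S2.sub (S1.mul_left 5)).add (S0.mul_left 4)
    refine this.congr fun n => ?_
    ring
  have hStsum : ∑' n : ℤ, ((n:ℝ)^2 - 1) * ((n:ℝ)^2 - 4) * g n = 0 := by
    have h1 : ∑' n : ℤ, ((n:ℝ)^2 - 1) * ((n:ℝ)^2 - 4) * g n
        = ∑' n : ℤ, (((n:ℝ)^4 * g n) - 5 * ((n:ℝ)^2 * g n) + 4 * g n) := by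
      refine tsum_congr fun n => ?_; ring
    rw [h1, Summable.tsum_add (S2.sub ((S1.mul_left 5))) (S0.mul_left 4),
      Summable.tsum_sub S2 (S1.mul_left 5), tsum_mul_left, tsum_mul_left]
    · linarith [key]
  have hgnn : ∀ n : ℤ, 0 ≤ ((n:ℝ)^2 - 1) * ((n:ℝ)^2 - 4) * g n := fun n =>
    mul_nonneg (coeff_nonneg n) (sq_nonneg _)
  have heach : ∀ n : ℤ, ((n:ℝ)^2 - 1) * ((n:ℝ)^2 - 4) * g n = 0 := by
    intro n
    refine le_antisymm ?_ (hgnn n)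
    have := Summable.le_tsum hSsum n (fun j _ => hgnn j)
    rwa [hStsum] at this
  -- c 0 = 0
  have c0 : c 0 = 0 := by
    show fourierCoeffOn Real.two_pi_pos (fun x => ((f x : ℝ) : ℂ)) 0 = 0
    rw [fourierCoeffOn_eq_integral]
    simp only [neg_zero, fourier_zero, one_smul]
    rw [intervalIntegral.integral_ofReal, hmean]
    simp
  have czero : ∀ n : ℤ, n ∉ ({-2, -1, 1, 2} : Finset ℤ) → c n = 0 := by
    intro n hn
    simp only [Finset.mem_insert, Finset.mem_singleton] at hn
    push_neg at hn
    obtain ⟨h2', h1', h1, h2⟩ := hn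
    rcases eq_or_ne n 0 with rfl | h0
    · exact c0
    · have hpos := coeff_pos h0 h1 h1' h2 h2'
      have := heach n
      have hg0 : g n = 0 := by
        rcases mul_eq_zero.mp this with h | h
        · exact absurd h (ne_of_gt hpos)
        · exact h
      have : ‖c n‖ = 0 := by
        have := hg0
        rw [hgdef] at this
        simpa [pow_eq_zero_iff] using this
      simpa using this
  -- reconstruction
  have hperC : Function.Periodic (fun x : ℝ => ((f x : ℝ) : ℂ)) (2*π) := fun x => by
    simp [hper x]
  have hcoefflift : ∀ n : ℤ, fourierCoeff hperC.lift n = c n := fun n => coeff_lift_eq hperC n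
  set G : C(AddCircle (2*π), ℂ) :=
    ⟨hperC.lift, lift_continuous (Complex.continuous_ofReal.comp hf.continuous) hperC⟩ with hG
  have hcoefflift' : ∀ n : ℤ, fourierCoeff (⇑G) n = c n := fun n => hcoefflift n
  have hsum2 : Summable (fourierCoeff (⇑G)) := by
    apply summable_of_ne_finset_zero (s := ({-2,-1,1,2} : Finset ℤ))
    intro n hn
    rw [hcoefflift' n]
    exact czero n hn
  refine ⟨(c 1).re + (c (-1)).re, (c (-1)).im - (c 1).im,
    (c 2).re + (c (-2)).re, (c (-2)).im - (c 2).im, fun θ => ?_⟩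
  have hps := has_pointwise_sum_fourier_series_of_summable (f := G) hsum2 (θ : AddCircle (2*π))
  have hfin : HasSum (fun i : ℤ => fourierCoeff (⇑G) i • fourier i (θ : AddCircle (2*π)))
      (∑ i ∈ ({-2,-1,1,2} : Finset ℤ), fourierCoeff (⇑G) i • fourier i (θ : AddCircle (2*π))) := by
    apply hasSum_sum_of_ne_finset_zero
    intro n hn
    rw [hcoefflift' n, czero n hn, zero_smul]
  have heq := hps.unique hfin
  have hGθ : (G (θ : AddCircle (2*π))) = ((f θ : ℝ) : ℂ) := hperC.lift_coe θ
  rw [hGθ] at heq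
  simp only [hcoefflift'] at heq
  have hre : f θ = (∑ i ∈ ({-2,-1,1,2} : Finset ℤ), c i • fourier i (θ : AddCircle (2*π))).re := by
    rw [← heq]
    simp
  rw [hre, Finset.sum_insert (by decide), Finset.sum_insert (by decide),
    Finset.sum_insert (by decide), Finset.sum_singleton]
  simp only [smul_eq_mul, fourier_eq_exp]
  rw [show (((-2:ℤ):ℝ)) * θ = -(2*θ) by push_cast; ring,
    show (((-1:ℤ):ℝ)) * θ = -θ by push_cast; ring,
    show (((1:ℤ):ℝ)) * θ = θ by push_cast; ring,
    show (((2:ℤ):ℝ)) * θ = 2*θ by push_cast; ring]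
  simp only [Complex.add_re, re_mul_exp, Real.cos_neg, Real.sin_neg]
  ring

end PartB

theorem spectral_poincare_circle_equality (f : ℝ → ℝ)
    (hf : ContDiff ℝ (⊤ : ℕ∞) f) (hper : Function.Periodic f (2 * Real.pi))
    (hmean : ∫ θ in (0:ℝ)..(2 * Real.pi), f θ = 0) :
    ((∫ θ in (0:ℝ)..(2 * Real.pi), (deriv f θ) ^ 2)
          - (∫ θ in (0:ℝ)..(2 * Real.pi), (f θ) ^ 2)
        = (1 / 4) * ((∫ θ in (0:ℝ)..(2 * Real.pi), (deriv (deriv f) θ) ^ 2)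
            - ∫ θ in (0:ℝ)..(2 * Real.pi), (deriv f θ) ^ 2))
      ↔ ∃ a₁ b₁ a₂ b₂ : ℝ, ∀ θ : ℝ,
          f θ = a₁ * Real.cos θ + b₁ * Real.sin θ
            + a₂ * Real.cos (2 * θ) + b₂ * Real.sin (2 * θ) := by
  constructor
  · intro hE
    exact forward_direction f hf hper hmean hE
  · rintro ⟨a₁, b₁, a₂, b₂, h⟩
    exact reverse_direction f a₁ b₁ a₂ b₂ h
end

section
/- Let p : ℝ → ℝ be a smooth 2π-periodic function with p''(θ) + p(θ) > 0 for all θ (the support function of a smooth strictly convex plane curve). Define L := ∫₀^{2π} p(θ) dθ, A := (1/2)∫₀^{2π} p(θ)( p''(θ) + p(θ) ) dθ, and A_e := −(1/2)∫₀^{2π} p''(θ)( p''(θ) + p(θ) ) dθ. Then 0 ≤ L² − 4πA ≤ π|A_e|. -/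
open MeasureTheory Real Complex Set Function AddCircle intervalIntegral
open scoped ContDiff

noncomputable section

local notation "𝕋" => (2 * Real.pi)

lemma hT0 : (0:ℝ) < 𝕋 := by positivity

instance factT : Fact ((0:ℝ) < 𝕋) := ⟨hT0⟩

lemma hab : (0:ℝ) < 0 + 𝕋 := lt_add_of_pos_right 0 hT0

noncomputable def fc (g : ℝ → ℂ) (n : ℤ) : ℂ := fourierCoeffOn hab g n

lemma periodic_deriv'_s16 (f : ℝ → ℝ) (c : ℝ) (h : Function.Periodic f c) :
    Function.Periodic (deriv f) c := by
  intro x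
  have h1 : (fun y => f (y + c)) = f := funext h
  calc deriv f (x + c) = deriv (fun y => f (y + c)) x := (deriv_comp_add_const f c x).symm
  _ = deriv f x := by rw [h1]

lemma fc_deriv (f f' : ℝ → ℂ) (hd : ∀ x, HasDerivAt f (f' x) x) (hc : Continuous f')
    (hper : f 𝕋 = f 0) (n : ℤ) :
    ‖fc f' n‖ ^ 2 = (n:ℝ) ^ 2 * ‖fc f n‖ ^ 2 := by
  rcases eq_or_ne n 0 with rfl | hn
  · have h0 : fc f' 0 = 0 := by
      rw [fc, fourierCoeffOn_eq_integral]
      simp only [neg_zero, fourier_zero, one_smul]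
      rw [intervalIntegral.integral_eq_sub_of_hasDerivAt (fun x _ => hd x)
        (hc.intervalIntegrable _ _)]
      rw [zero_add, hper, sub_self, smul_zero]
    rw [h0]; simp
  · have h8 : fc f' n = I * n * fc f n := by
      have key := fourierCoeffOn_of_hasDerivAt hab hn (fun x hx => hd x)
        (hc.intervalIntegrable _ _)
      have h7 : f (0 + 𝕋) - f 0 = 0 := by rw [zero_add, hper, sub_self]
      rw [h7, mul_zero, zero_sub] at key
      have hπ : (π:ℂ) ≠ 0 := ofReal_ne_zero.2 pi_ne_zero
      have hn' : (n:ℂ) ≠ 0 := Int.cast_ne_zero.2 hn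
      rw [fc, fc, key]
      push_cast
      field_simp
      ring_nf
      try simp [I_sq]
    rw [h8]
    rw [norm_mul, norm_mul, Complex.norm_I, one_mul, mul_pow]
    congr 1
    rw [Complex.norm_intCast]
    rw [← Int.cast_abs]
    push_cast
    rw [_root_.sq_abs]

lemma my_parseval (g : ℝ → ℂ) (hg : Continuous g) (hper : g 0 = g 𝕋) :
    Summable (fun n => ‖fc g n‖ ^ 2) ∧
    ∑' n : ℤ, ‖fc g n‖ ^ 2 = (1/𝕋) * ∫ x in (0:ℝ)..𝕋, ‖g x‖ ^ 2 := by
  have hGcont : Continuous (liftIco 𝕋 0 g) := liftIco_zero_continuous hper hg.continuousOn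
  set G : C(AddCircle 𝕋, ℂ) := ⟨liftIco 𝕋 0 g, hGcont⟩ with hGdef
  have hcoe : ∀ x ∈ Icc (0:ℝ) 𝕋, G x = g x := by
    intro x hx
    rcases eq_or_lt_of_le hx.2 with h | h
    · subst h
      have : ((𝕋 : ℝ) : AddCircle 𝕋) = ((0:ℝ) : AddCircle 𝕋) := by
        simpa using (AddCircle.coe_add_period 𝕋 0)
      show liftIco 𝕋 0 g _ = _
      rw [this]
      rw [liftIco_coe_apply (⟨le_rfl, by positivity⟩ : (0:ℝ) ∈ Ico 0 (0 + 𝕋))]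
      exact hper
    · exact liftIco_zero_coe_apply ⟨hx.1, h⟩
  set F := ContinuousMap.toLp (E := ℂ) 2 haarAddCircle ℂ G with hFdef
  have hc : ∀ n, fourierCoeff (F : AddCircle 𝕋 → ℂ) n = fc g n := by
    intro n
    rw [hFdef, fourierCoeff_toLp]
    exact fourierCoeff_liftIco_eq g n
  have h2 : ∀ x : ℝ, x ^ (2:ENNReal).toReal = x ^ 2 := by
    intro x
    rw [ENNReal.toReal_ofNat, show ((2:ℝ)) = ((2:ℕ):ℝ) by norm_num, Real.rpow_natCast]
  constructor
  · have hsum := (lp.memℓp (fourierBasis.repr F)).summable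
      (by norm_num : 0 < (2:ENNReal).toReal)
    simp_rw [h2, fourierBasis_repr, hc] at hsum
    exact hsum
  · have hts := tsum_sq_fourierCoeff F
    simp_rw [hc] at hts
    rw [hts]
    have hae : (F : AddCircle 𝕋 → ℂ) =ᵐ[haarAddCircle] G :=
      ContinuousMap.coeFn_toLp (𝕜 := ℂ) (p := 2) (μ := haarAddCircle) G
    have h3 : ∫ t, ‖(F : AddCircle 𝕋 → ℂ) t‖ ^ 2 ∂haarAddCircle
        = ∫ t, ‖G t‖ ^ 2 ∂haarAddCircle :=
      integral_congr_ae (hae.mono fun t ht => by simp only [ht])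
    rw [h3]
    have h4 : ∫ x in (0:ℝ)..(0+𝕋), ‖G x‖ ^ 2 = ∫ t : AddCircle 𝕋, ‖G t‖ ^ 2 :=
      AddCircle.intervalIntegral_preimage 𝕋 0 (fun t => ‖G t‖ ^ 2)
    have h5 : ∫ t : AddCircle 𝕋, ‖G t‖ ^ 2
        = 𝕋 * ∫ t, ‖G t‖ ^ 2 ∂haarAddCircle := by
      rw [volume_eq_smul_haarAddCircle, MeasureTheory.integral_smul_measure,
        ENNReal.toReal_ofReal hT0.le, smul_eq_mul]
    have h6 : ∫ x in (0:ℝ)..(0+𝕋), ‖G x‖ ^ 2 = ∫ x in (0:ℝ)..𝕋, ‖g x‖ ^ 2 := by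
      rw [zero_add]
      apply intervalIntegral.integral_congr
      intro x hx
      rw [uIcc_of_le hT0.le] at hx
      simp only [hcoe x hx]
    rw [← h6, h4, h5]
    field_simp

lemma my_parseval_real (g : ℝ → ℝ) (hg : Continuous g) (hper : g 0 = g 𝕋) :
    Summable (fun n => ‖fc (fun x => (g x : ℂ)) n‖ ^ 2) ∧
    ∑' n : ℤ, ‖fc (fun x => (g x : ℂ)) n‖ ^ 2 = (1/𝕋) * ∫ x in (0:ℝ)..𝕋, (g x) ^ 2 := by
  obtain ⟨h1, h2⟩ := my_parseval (fun x => (g x : ℂ))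
    (Complex.continuous_ofReal.comp hg) (by simp [hper])
  refine ⟨h1, ?_⟩
  rw [h2]
  congr 1
  apply intervalIntegral.integral_congr
  intro x _
  simp [Complex.norm_real, Real.norm_eq_abs, _root_.sq_abs]

lemma int_sq_facts (n : ℤ) (hn : n ≠ 0) :
    1 ≤ (n:ℝ)^2 ∧ ((n:ℝ)^2 = 1 ∨ 4 ≤ (n:ℝ)^2) := by
  have h1 : 1 ≤ |n| := Int.one_le_abs hn
  have h1' : (1:ℝ) ≤ |(n:ℝ)| := by rw [← Int.cast_abs]; exact_mod_cast h1
  constructor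
  · nlinarith [_root_.sq_abs (n:ℝ)]
  · rcases eq_or_lt_of_le h1 with h | h
    · left
      have h' : |n| = 1 := h.symm
      rcases (abs_eq (by norm_num : (0:ℤ) ≤ 1)).mp h' with rfl | rfl <;> norm_num
    · right
      have h2 : (2:ℝ) ≤ |(n:ℝ)| := by
        rw [← Int.cast_abs]; exact_mod_cast h
      nlinarith [_root_.sq_abs (n:ℝ)]

theorem hurwitz_reverse_isoperimetric (p : ℝ → ℝ)
    (hp : ContDiff ℝ (⊤ : ℕ∞) p) (hper : Function.Periodic p (2 * Real.pi))
    (hconv : ∀ θ, 0 < deriv (deriv p) θ + p θ)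
    (L A Ae : ℝ)
    (hL : L = ∫ θ in (0:ℝ)..(2 * Real.pi), p θ)
    (hA : A = (1 / 2) * ∫ θ in (0:ℝ)..(2 * Real.pi),
        p θ * (deriv (deriv p) θ + p θ))
    (hAe : Ae = -(1 / 2) * ∫ θ in (0:ℝ)..(2 * Real.pi),
        deriv (deriv p) θ * (deriv (deriv p) θ + p θ)) :
    0 ≤ L ^ 2 - 4 * Real.pi * A ∧
    L ^ 2 - 4 * Real.pi * A ≤ Real.pi * |Ae| := by
  have hπ := Real.pi_pos
  set p1 := deriv p with hp1def
  set p2 := deriv p1 with hp2def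
  -- smoothness
  have hpc : Continuous p := hp.continuous
  have hpinf : ContDiff ℝ ∞ p := hp.of_le (by simp)
  have hp1smooth : ContDiff ℝ ∞ p1 := (contDiff_infty_iff_deriv.mp hpinf).2
  have hp2smooth : ContDiff ℝ ∞ p2 := (contDiff_infty_iff_deriv.mp hp1smooth).2
  have hp1c : Continuous p1 := hp1smooth.continuous
  have hp2c : Continuous p2 := hp2smooth.continuous
  have hp1d : ∀ x, HasDerivAt p (p1 x) x := fun x =>
    ((contDiff_infty_iff_deriv.mp hpinf).1 x).hasDerivAt
  have hp2d : ∀ x, HasDerivAt p1 (p2 x) x := fun x =>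
    ((contDiff_infty_iff_deriv.mp hp1smooth).1 x).hasDerivAt
  -- periodicity
  have hper1 : Function.Periodic p1 𝕋 := periodic_deriv'_s16 p _ hper
  have hpT : p 𝕋 = p 0 := by simpa using hper 0
  have hp1T : p1 𝕋 = p1 0 := by simpa using hper1 0
  have hper2 : Function.Periodic p2 𝕋 := periodic_deriv'_s16 p1 _ hper1
  have hp2T : p2 𝕋 = p2 0 := by simpa using hper2 0
  -- complex lifts
  set P : ℝ → ℂ := fun x => (p x : ℂ) with hPdef
  set P1 : ℝ → ℂ := fun x => (p1 x : ℂ) with hP1def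
  set P2 : ℝ → ℂ := fun x => (p2 x : ℂ) with hP2def
  have hPd : ∀ x, HasDerivAt P (P1 x) x := fun x => (hp1d x).ofReal_comp
  have hP1d : ∀ x, HasDerivAt P1 (P2 x) x := fun x => (hp2d x).ofReal_comp
  have hP1c : Continuous P1 := Complex.continuous_ofReal.comp hp1c
  have hP2c : Continuous P2 := Complex.continuous_ofReal.comp hp2c
  set q : ℤ → ℝ := fun n => ‖fc P n‖ ^ 2 with hqdef
  -- Parseval
  obtain ⟨hs0, ht0⟩ := my_parseval_real p hpc hpT.symm
  have hs0' : Summable q := hs0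
  obtain ⟨hs1, ht1⟩ := my_parseval_real p1 hp1c hp1T.symm
  obtain ⟨hs2, ht2⟩ := my_parseval_real p2 hp2c hp2T.symm
  have hrel1 : ∀ n, ‖fc P1 n‖ ^ 2 = (n:ℝ)^2 * q n := fun n =>
    fc_deriv P P1 hPd hP1c (by simp [hPdef, hpT]) n
  have hrel2 : ∀ n, ‖fc P2 n‖ ^ 2 = (n:ℝ)^2 * ((n:ℝ)^2 * q n) := fun n => by
    rw [fc_deriv P1 P2 hP1d hP2c (by simp [hP1def, hp1T]) n, hrel1]
  simp only [show ∀ n, ‖fc (fun x => (p1 x : ℂ)) n‖ ^ 2 = (n:ℝ)^2 * q n from hrel1] at hs1 ht1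
  simp only [show ∀ n, ‖fc (fun x => (p2 x : ℂ)) n‖ ^ 2 = (n:ℝ)^2 * ((n:ℝ)^2 * q n) from hrel2] at hs2 ht2
  set Q0 := ∑' n : ℤ, q n with hQ0def
  set Q1 := ∑' n : ℤ, (n:ℝ)^2 * q n with hQ1def
  set Q2 := ∑' n : ℤ, (n:ℝ)^2 * ((n:ℝ)^2 * q n) with hQ2def
  -- integral identities
  have e1 : (∫ x in (0:ℝ)..𝕋, (p x)^2) = 𝕋 * Q0 := by
    rw [ht0]; field_simp
  have e2 : (∫ x in (0:ℝ)..𝕋, (p1 x)^2) = 𝕋 * Q1 := by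
    rw [ht1]; field_simp
  have e3 : (∫ x in (0:ℝ)..𝕋, (p2 x)^2) = 𝕋 * Q2 := by
    rw [ht2]; field_simp
  have e4 : (∫ x in (0:ℝ)..𝕋, p x * p2 x) = - ∫ x in (0:ℝ)..𝕋, (p1 x)^2 := by
    have := intervalIntegral.integral_mul_deriv_eq_deriv_mul
      (a := (0:ℝ)) (b := 𝕋) (u := p) (u' := p1) (v := p1) (v' := p2)
      (fun x _ => hp1d x) (fun x _ => hp2d x)
      (hp1c.intervalIntegrable _ _) (hp2c.intervalIntegrable _ _)
    rw [hpT, hp1T] at this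
    rw [this]
    have : (∫ x in (0:ℝ)..𝕋, p1 x * p1 x) = ∫ x in (0:ℝ)..𝕋, (p1 x)^2 := by
      apply intervalIntegral.integral_congr; intro x _; ring
    rw [this]; ring
  -- split the A and Ae integrals
  have hsplitA : (∫ θ in (0:ℝ)..𝕋, p θ * (p2 θ + p θ))
      = (∫ x in (0:ℝ)..𝕋, p x * p2 x) + ∫ x in (0:ℝ)..𝕋, (p x)^2 := by
    rw [← intervalIntegral.integral_add (f := fun x => p x * p2 x) (g := fun x => p x ^ 2) ((hpc.mul hp2c).intervalIntegrable _ _)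
      ((hpc.pow 2).intervalIntegrable _ _)]
    · apply intervalIntegral.integral_congr; intro x _; ring
  have hsplitAe : (∫ θ in (0:ℝ)..𝕋, p2 θ * (p2 θ + p θ))
      = (∫ x in (0:ℝ)..𝕋, (p2 x)^2) + ∫ x in (0:ℝ)..𝕋, p x * p2 x := by
    rw [← intervalIntegral.integral_add (f := fun x => p2 x ^ 2) (g := fun x => p x * p2 x) ((hp2c.pow 2).intervalIntegrable _ _)
      ((hpc.mul hp2c).intervalIntegrable _ _)]
    · apply intervalIntegral.integral_congr; intro x _; ring
  -- zeroth coefficient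
  have hc0 : fc P 0 = ((1/𝕋 * L : ℝ) : ℂ) := by
    rw [hPdef, fc, fourierCoeffOn_eq_integral]
    simp only [neg_zero, fourier_zero, one_smul, zero_add, sub_zero]
    rw [intervalIntegral.integral_ofReal, Complex.real_smul, hL]
    push_cast
    ring
  have hq0 : q 0 = (1/𝕋 * L)^2 := by
    rw [hqdef]
    simp only [hc0]
    rw [Complex.norm_real, Real.norm_eq_abs, _root_.sq_abs]
  have hL2 : L^2 = (2*π)^2 * q 0 := by
    rw [hq0]; field_simp
  -- values of A and Ae
  have hAval : A = π * (Q0 - Q1) := by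
    rw [hA, hsplitA, e4, e2, e1]; ring
  have hAeval : Ae = -(π * (Q2 - Q1)) := by
    rw [hAe, hsplitAe, e4, e3, e2]; ring
  -- key sum inequalities
  have hqnn : ∀ n, 0 ≤ q n := fun n => sq_nonneg _
  have hind : Summable (fun n : ℤ => if n = 0 then q 0 else 0) :=
    ⟨_, hasSum_ite_eq 0 (q 0)⟩
  have hind4 : Summable (fun n : ℤ => if n = 0 then 4 * q 0 else 0) :=
    ⟨_, hasSum_ite_eq 0 (4 * q 0)⟩
  have key1 : (0:ℝ) ≤ Q1 - Q0 + q 0 := by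
    have hr_eq : (fun n : ℤ => if n = 0 then (0:ℝ) else ((n:ℝ)^2 - 1) * q n)
        = fun n : ℤ => ((n:ℝ)^2 * q n - q n) + (if n = 0 then q 0 else 0) := by
      funext n
      by_cases h : n = 0 <;> simp [h] <;> ring
    have hpos := tsum_nonneg (L := SummationFilter.unconditional ℤ) (g := fun n : ℤ => if n = 0 then (0:ℝ) else ((n:ℝ)^2 - 1) * q n)
      (fun n => by
        by_cases h : n = 0
        · simp [h]
        · simp only [h, if_false]
          exact mul_nonneg (by linarith [(int_sq_facts n h).1]) (hqnn n))
    rw [hr_eq, Summable.tsum_add (hs1.sub hs0') hind, Summable.tsum_sub hs1 hs0', tsum_ite_eq] at hpos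
    exact hpos
  have key2 : (0:ℝ) ≤ (Q2 - 5*Q1 + 4*Q0) - 4 * q 0 := by
    have ht_eq : (fun n : ℤ => if n = 0 then (0:ℝ) else ((n:ℝ)^2 - 1) * (((n:ℝ)^2 - 4) * q n))
        = fun n : ℤ => (((n:ℝ)^2 * ((n:ℝ)^2 * q n) - 5 * ((n:ℝ)^2 * q n)) + 4 * q n)
          - (if n = 0 then 4 * q 0 else 0) := by
      funext n
      by_cases h : n = 0 <;> simp [h] <;> ring
    have hXsum : Summable (fun n : ℤ =>
        ((n:ℝ)^2 * ((n:ℝ)^2 * q n) - 5 * ((n:ℝ)^2 * q n)) + 4 * q n) :=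
      (hs2.sub (hs1.mul_left 5)).add (hs0'.mul_left 4)
    have hpos := tsum_nonneg (L := SummationFilter.unconditional ℤ)
      (g := fun n : ℤ => if n = 0 then (0:ℝ) else ((n:ℝ)^2 - 1) * (((n:ℝ)^2 - 4) * q n))
      (fun n => by
        by_cases h : n = 0
        · simp [h]
        · simp only [h, if_false]
          obtain ⟨h1, h4⟩ := int_sq_facts n h
          rcases h4 with h4 | h4
          · rw [h4]; simp
          · exact mul_nonneg (by linarith) (mul_nonneg (by linarith) (hqnn n)))
    rw [ht_eq, Summable.tsum_sub hXsum hind4, Summable.tsum_add (hs2.sub (hs1.mul_left 5)) (hs0'.mul_left 4),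
      Summable.tsum_sub hs2 (hs1.mul_left 5), tsum_mul_left, tsum_mul_left, tsum_ite_eq] at hpos
    exact hpos
  -- finish
  have hmain : L ^ 2 - 4 * π * A = 4*π^2*(Q1 - Q0 + q 0) := by
    rw [hAval, hL2]; ring
  constructor
  · rw [hmain]
    have h4 : (0:ℝ) ≤ 4*π^2 := by positivity
    nlinarith [mul_nonneg h4 key1]
  · rw [hmain]
    have h2' : π * (Q2 - Q1) ≤ |Ae| := by
      calc π * (Q2 - Q1) = -Ae := by rw [hAeval]; ring
      _ ≤ |Ae| := neg_le_abs Ae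
    have hkey2' : (0:ℝ) ≤ π^2 * ((Q2 - 5*Q1 + 4*Q0) - 4*q 0) :=
      mul_nonneg (sq_nonneg π) key2
    calc 4*π^2*(Q1 - Q0 + q 0) ≤ π^2 * (Q2 - Q1) := by nlinarith [hkey2']
    _ = π * (π * (Q2 - Q1)) := by ring
    _ ≤ π * |Ae| := mul_le_mul_of_nonneg_left h2' hπ.le

end
end

section
/- Let n ≥ 1 and let A be an n × n real matrix. Define real numbers H₀, H₁, …, H_n by the polynomial identity det(1 + t·A) = Σ_{k=0}^{n} H_k t^k (valid for all t ∈ ℝ), and define the Newton matrices recursively by T₀ := 1 (the identity matrix) and T_r := H_r·1 − A·T_{r−1} for 1 ≤ r ≤ n−1. Then for every u ∈ ℝ, the adjugate matrix satisfies adjugate(1 + u·A) = Σ_{r=0}^{n−1} u^r · T_r. -/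
open Polynomial Matrix Finset

theorem adjugate_eq_sum_newton_tensors (n : ℕ) (hn : 1 ≤ n)
    (A : Matrix (Fin n) (Fin n) ℝ)
    (H : ℕ → ℝ)
    (hH : ∀ t : ℝ, (1 + t • A).det = ∑ k ∈ Finset.range (n + 1), H k * t ^ k)
    (T : ℕ → Matrix (Fin n) (Fin n) ℝ)
    (hT0 : T 0 = 1)
    (hTrec : ∀ r, 1 ≤ r → r ≤ n - 1 →
        T r = H r • (1 : Matrix (Fin n) (Fin n) ℝ) - A * T (r - 1)) :
    ∀ u : ℝ, (1 + u • A).adjugate = ∑ r ∈ Finset.range n, u ^ r • T r := by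
  classical
  set P : Matrix (Fin n) (Fin n) ℝ[X] := (X : ℝ[X]) • A.map C + 1 with hP
  -- evaluation of P at a real number
  have hmap : ∀ u : ℝ, P.map (evalRingHom u) = 1 + u • A := by
    intro u
    ext i j
    simp [hP, Matrix.map_apply, Matrix.add_apply, Matrix.smul_apply, Matrix.one_apply,
      apply_ite (eval u)]
    ring
  -- the determinant of P as a polynomial
  have hdet : P.det = ∑ k ∈ Finset.range (n + 1), C (H k) * X ^ k := by
    apply Polynomial.funext
    intro u
    have h1 : eval u P.det = (1 + u • A).det := by
      rw [show eval u P.det = (evalRingHom u) P.det from rfl, RingHom.map_det,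
        RingHom.mapMatrix_apply, hmap]
    rw [h1, hH u]
    simp [eval_finset_sum]
  have hdetcoeff : ∀ r, r ≤ n → P.det.coeff r = H r := by
    intro r hr
    rw [hdet, finset_sum_coeff]
    have : ∀ k ∈ Finset.range (n + 1), k ≠ r → (C (H k) * X ^ k).coeff r = 0 := by
      intro k _ hk
      simp [coeff_C_mul, coeff_X_pow, Ne.symm hk]
    rw [Finset.sum_eq_single r (fun k hk hkr => this k hk hkr)
      (fun hr' => absurd (Finset.mem_range.mpr (by omega)) hr')]
    simp [coeff_C_mul, coeff_X_pow]
  -- H 0 = 1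
  have hH0 : H 0 = 1 := by
    have h := hH 0
    rw [Finset.sum_eq_single 0 (fun k _ hk => by simp [zero_pow hk])
      (fun h0 => absurd (Finset.mem_range.mpr (by omega)) h0)] at h
    simpa using h.symm
  -- the coefficient matrices of the adjugate
  set B : ℕ → Matrix (Fin n) (Fin n) ℝ :=
    fun r => Matrix.of fun i j => (P.adjugate i j).coeff r with hB
  -- adjugate entries as determinants, for degree bounds
  have hadj_entry : ∀ i j : Fin n, P.adjugate i j =
      Matrix.det ((X : ℝ[X]) • (A.updateRow j 0).map C
        + ((1 : Matrix (Fin n) (Fin n) ℝ).updateRow j (Pi.single i 1)).map C) := by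
    intro i j
    rw [adjugate_apply]
    congr 1
    ext a b
    by_cases h : a = j <;>
      simp [hP, h, Matrix.updateRow_apply, Matrix.map_apply, Matrix.smul_apply,
        Matrix.add_apply, Pi.single_apply, Matrix.one_apply, apply_ite (C : ℝ →+* ℝ[X])]
  have hdeg : ∀ i j : Fin n, (P.adjugate i j).natDegree < n := by
    intro i j
    have hle : (P.adjugate i j).natDegree ≤ n := by
      rw [hadj_entry i j]
      simpa using Polynomial.natDegree_det_X_add_C_le (A.updateRow j 0)
        ((1 : Matrix (Fin n) (Fin n) ℝ).updateRow j (Pi.single i 1))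
    have hcn : (P.adjugate i j).coeff n = 0 := by
      rw [hadj_entry i j]
      have h := Polynomial.coeff_det_X_add_C_card (A.updateRow j 0)
        ((1 : Matrix (Fin n) (Fin n) ℝ).updateRow j (Pi.single i 1))
      rw [Fintype.card_fin] at h
      rw [h]
      exact Matrix.det_eq_zero_of_row_eq_zero j (by simp)
    rcases lt_or_eq_of_le hle with h | h
    · exact h
    · exfalso
      have hlc : (P.adjugate i j).leadingCoeff = 0 := by
        rw [leadingCoeff, h, hcn]
      have hz : P.adjugate i j = 0 := leadingCoeff_eq_zero.mp hlc
      rw [hz, natDegree_zero] at h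
      omega
  -- the key recursion coming from P * adjugate P = det P • 1
  have key : ∀ i j : Fin n,
      (X : ℝ[X]) * (∑ k, C (A i k) * P.adjugate k j) + P.adjugate i j
        = P.det * C ((1 : Matrix (Fin n) (Fin n) ℝ) i j) := by
    intro i j
    have hmul := Matrix.mul_adjugate P
    have h := congrFun (congrFun hmul i) j
    rw [Matrix.mul_apply] at h
    have hl : ∑ k, P i k * P.adjugate k j
        = (X : ℝ[X]) * (∑ k, C (A i k) * P.adjugate k j) + P.adjugate i j := by
      rw [Finset.mul_sum]
      simp only [hP, Matrix.add_apply, Matrix.smul_apply, Matrix.map_apply, smul_eq_mul,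
        add_mul, Finset.sum_add_distrib, Matrix.one_apply, ite_mul, one_mul, zero_mul,
        mul_assoc]
      rw [Finset.sum_ite_eq]
      simp
    rw [hl] at h
    rw [h]
    simp [Matrix.smul_apply, Matrix.one_apply, apply_ite (C : ℝ →+* ℝ[X]), smul_eq_mul]
  -- B 0 = 1
  have hB0 : B 0 = 1 := by
    ext i j
    have h := congrArg (fun p => p.coeff 0) (key i j)
    simp only [coeff_add, coeff_X_mul_zero, zero_add] at h
    rw [mul_comm, coeff_C_mul, hdetcoeff 0 (by omega), hH0] at h
    simpa [hB, Matrix.one_apply] using h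
  -- the recursion for B
  have hBrec : ∀ r, 1 ≤ r → r ≤ n →
      B r = H r • (1 : Matrix (Fin n) (Fin n) ℝ) - A * B (r - 1) := by
    intro r hr1 hrn
    ext i j
    obtain ⟨s, rfl⟩ : ∃ s, r = s + 1 := ⟨r - 1, by omega⟩
    have h := congrArg (fun p => p.coeff (s + 1)) (key i j)
    simp only [coeff_add, coeff_X_mul] at h
    rw [mul_comm P.det, coeff_C_mul, hdetcoeff (s + 1) hrn, finset_sum_coeff] at h
    simp only [coeff_C_mul] at h
    have hsum : ∑ k, A i k * (P.adjugate k j).coeff s = (A * B s) i j := by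
      rw [Matrix.mul_apply]; rfl
    rw [hsum] at h
    have : B (s + 1) i j = ((1 : Matrix (Fin n) (Fin n) ℝ) i j) * H (s + 1)
        - (A * B s) i j := by
      have hb : B (s + 1) i j = (P.adjugate i j).coeff (s + 1) := rfl
      rw [hb]; linarith [h]
    simp only [Matrix.sub_apply, Matrix.smul_apply, smul_eq_mul, Nat.add_sub_cancel]
    rw [this]; ring
  -- B r = T r for r < n
  have hBT : ∀ r, r < n → B r = T r := by
    intro r
    induction r with
    | zero => intro _; rw [hB0, hT0]
    | succ s ih =>
      intro hs
      rw [hBrec (s + 1) (by omega) (by omega), hTrec (s + 1) (by omega) (by omega),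
        Nat.add_sub_cancel, ih (by omega)]
  -- conclude by evaluation
  intro u
  have h1 : (1 + u • A).adjugate = P.adjugate.map (evalRingHom u) := by
    rw [← hmap u, ← RingHom.mapMatrix_apply, ← RingHom.map_adjugate, RingHom.mapMatrix_apply]
  rw [h1]
  ext i j
  have h2 : (P.adjugate i j).eval u
      = ∑ r ∈ Finset.range n, (P.adjugate i j).coeff r * u ^ r :=
    Polynomial.eval_eq_sum_range' (hdeg i j) u
  rw [Matrix.map_apply]
  rw [show (evalRingHom u) (P.adjugate i j) = (P.adjugate i j).eval u from rfl, h2]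
  rw [Matrix.sum_apply]
  refine Finset.sum_congr rfl fun r hr => ?_
  rw [Matrix.smul_apply, smul_eq_mul, ← hBT r (Finset.mem_range.mp hr)]
  rw [mul_comm]
  rfl
end
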